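/- Let η be a composition and I a subset maximal with respect to η, with t_1 := min(I). Then ∏_{i=1}^n (c_I(η)‾)_i^{(c_I(η))_i} = q^{2η_{t_1}+1} t^{−l'_η(t_1)} ∏_{i=1}^n η̄_i^{η_i}, where c_I(η)‾ is the spectral vector of c_I(η); equivalently, k_η / k_{c_I(η)} = d'_η(q^{−1},t^{−1}) / (q^{2η_{t_1}+1} t^{−l'_η(t_1)} d'_{c_I(η)}(q^{−1},t^{−1})). -/

import Mathlib

open scoped BigOperators Classical

noncomputable section

/-- The ground field `F = ℚ(q,t)`. -/
abbrev F : Type := FractionRing (MvPolynomial (Fin 2) ℚ)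

/-- The indeterminate `q` of `F = ℚ(q,t)`. -/
def q : F := algebraMap (MvPolynomial (Fin 2) ℚ) F (MvPolynomial.X 0)

/-- The indeterminate `t` of `F = ℚ(q,t)`. -/
def t : F := algebraMap (MvPolynomial (Fin 2) ℚ) F (MvPolynomial.X 1)

/-- A composition with (at most) `n` parts: nonzero entries only in positions `1,…,n`. -/
def IsComp (n : ℕ) (η : ℕ → ℕ) : Prop := ∀ j, η j ≠ 0 → j ∈ Finset.Icc 1 n

/-- The modulus `|η| = η_1 + ⋯ + η_n`. -/
def wt (n : ℕ) (η : ℕ → ℕ) : ℕ := ∑ j ∈ Finset.Icc 1 n, η j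

/-- `l'_η(i) = #{j<i : η_j ≥ η_i} + #{j>i : η_j > η_i}`. -/
def lprime (n : ℕ) (η : ℕ → ℕ) (i : ℕ) : ℕ :=
  ((Finset.Icc 1 n).filter fun j => j < i ∧ η i ≤ η j).card +
  ((Finset.Icc 1 n).filter fun j => i < j ∧ η i < η j).card

/-- The spectral vector `η̄` with parameters `qp, tp`: `η̄_i = qp^(η_i) tp^(-l'_η(i))`. -/
def spec (qp tp : F) (n : ℕ) (η : ℕ → ℕ) : ℕ → F := fun i =>
  qp ^ (η i) * tp ^ (-(lprime n η i : ℤ))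

/-- The finitely supported function obtained from `η` by truncating outside `[1,n]`. -/
def truncFinsupp (n : ℕ) (η : ℕ → ℕ) : ℕ →₀ ℕ :=
  Finsupp.onFinset (Finset.Icc 1 n) (fun j => if j ∈ Finset.Icc 1 n then η j else 0)
    (fun a ha => by by_contra h; simp [h] at ha)

/-- The point obtained from `z` by exchanging coordinates `i` and `j`. -/
def swapPt (i j : ℕ) (z : ℕ → F) : ℕ → F :=
  fun k => if k = i then z j else if k = j then z i else z k

/-- The transposition operator `s_i`. -/
def sOp (i : ℕ) (f : (ℕ → F) → F) : (ℕ → F) → F := fun z => f (swapPt i (i+1) z)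

/-- The Hecke operator `H_i` (with Hecke parameter `tp`). -/
def HOp (tp : F) (i : ℕ) (f : (ℕ → F) → F) : (ℕ → F) → F := fun z =>
  (tp - 1) * z i / (z i - z (i+1)) * f z +
    (z i - tp * z (i+1)) / (z i - z (i+1)) * f (swapPt i (i+1) z)

/-- The point `(z_n/q, z_1, …, z_{n-1})` (coordinates outside `[1,n]` unchanged). -/
def deltaPt (qp : F) (n : ℕ) (z : ℕ → F) : ℕ → F := fun k =>
  if k = 1 then z n / qp else if k ≤ n then z (k-1) else z k

/-- The operator `Φ = (z_n - t^{-n+1})·Δ`. -/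
def PhiOp (qp tp : F) (n : ℕ) (f : (ℕ → F) → F) : (ℕ → F) → F := fun z =>
  (z n - tp ^ (1 - (n:ℤ))) * f (deltaPt qp n z)

/-- The operator product `H_a H_{a+1} ⋯ H_b` (the identity when `a > b`). -/
def Hprod (tp : F) (a b : ℕ) (f : (ℕ → F) → F) : (ℕ → F) → F :=
  (List.range' a (b + 1 - a)).foldr (fun j g => HOp tp j g) f

/-- The operator `Z̃_i = H_i ⋯ H_{n-1} Φ H_1 ⋯ H_{i-1}`. -/
def Ztilde (qp tp : F) (n i : ℕ) (f : (ℕ → F) → F) : (ℕ → F) → F :=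
  Hprod tp i (n-1) (PhiOp qp tp n (Hprod tp 1 (i-1) f))

/-- The Cherednik operator `Ξ_i = z_i⁻¹ + z_i⁻¹ H_i ⋯ H_{n-1} Φ H_1 ⋯ H_{i-1}`. -/
def XiOp (qp tp : F) (n i : ℕ) (f : (ℕ → F) → F) : (ℕ → F) → F := fun z =>
  (z i)⁻¹ * f z + (z i)⁻¹ * Ztilde qp tp n i f z

/-- The operator product `Ξ_1 ⋯ Ξ̂_i ⋯ Ξ_n` (with `Ξ_i` omitted). -/
def XiProdOmit (qp tp : F) (n i : ℕ) (f : (ℕ → F) → F) : (ℕ → F) → F :=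
  ((List.range' 1 n).filter (fun j => j ≠ i)).foldr (fun j g => XiOp qp tp n j g) f

/-- The operator `Z_i = t^{-binom(n,2)} (z_i Ξ_i - 1) Ξ_1 ⋯ Ξ̂_i ⋯ Ξ_n`. -/
def ZOp (qp tp : F) (n i : ℕ) (f : (ℕ → F) → F) : (ℕ → F) → F := fun z =>
  tp ^ (-((n * (n-1) / 2 : ℕ) : ℤ)) *
    (z i * XiOp qp tp n i (XiProdOmit qp tp n i f) z - XiProdOmit qp tp n i f z)

/-- A `qp`-generic point: the quantities `z_i qp^a` (for `1 ≤ i ≤ n`, `a ∈ ℕ`) are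
pairwise distinct.  All the rational operations occurring in the operators above are
defined at such points. -/
def Generic (qp : F) (n : ℕ) (z : ℕ → F) : Prop :=
  ∀ i ∈ Finset.Icc 1 n, ∀ j ∈ Finset.Icc 1 n, ∀ a b : ℕ,
    (i ≠ j ∨ a ≠ b) → z i * qp ^ a ≠ z j * qp ^ b

/-- The Demazure-Lusztig operator `T_i`. -/
def TOp (tp : F) (i : ℕ) (f : (ℕ → F) → F) : (ℕ → F) → F := fun z =>
  tp * f z + (tp * z i - z (i+1)) / (z i - z (i+1)) * (f (swapPt i (i+1) z) - f z)

/-- The inverse Demazure-Lusztig operator `T_i⁻¹ = t⁻¹ - 1 + t⁻¹ T_i`. -/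
def TinvOp (tp : F) (i : ℕ) (f : (ℕ → F) → F) : (ℕ → F) → F := fun z =>
  (tp⁻¹ - 1) * f z + tp⁻¹ * TOp tp i f z

/-- The point obtained from `z` by the `q`-shift `z_1 ↦ q z_1`. -/
def tauPt (qp : F) (z : ℕ → F) : ℕ → F := fun k => if k = 1 then qp * z 1 else z k

/-- The operator `ω = s_{n-1} ⋯ s_1 τ_1`. -/
def omegaOp (qp : F) (n : ℕ) (f : (ℕ → F) → F) : (ℕ → F) → F :=
  (List.range' 1 (n-1)).foldl (fun g j => sOp j g) (fun z => f (tauPt qp z))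

/-- The operator product `T_a T_{a+1} ⋯ T_b` (identity when `a > b`). -/
def Tprod (tp : F) (a b : ℕ) (f : (ℕ → F) → F) : (ℕ → F) → F :=
  (List.range' a (b + 1 - a)).foldr (fun j g => TOp tp j g) f

/-- The operator product `T_a⁻¹ T_{a+1}⁻¹ ⋯ T_b⁻¹` (identity when `a > b`). -/
def TinvProd (tp : F) (a b : ℕ) (f : (ℕ → F) → F) : (ℕ → F) → F :=
  (List.range' a (b + 1 - a)).foldr (fun j g => TinvOp tp j g) f

/-- The Cherednik operator `Y_i = t^{-n+1} T_i ⋯ T_{n-1} ω T_1⁻¹ ⋯ T_{i-1}⁻¹`. -/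
def YOp (qp tp : F) (n i : ℕ) (f : (ℕ → F) → F) : (ℕ → F) → F := fun z =>
  tp ^ (1 - (n:ℤ)) * Tprod tp i (n-1) (omegaOp qp n (TinvProd tp 1 (i-1) f)) z

/-- Strict dominance order on compositions (restricted to the window `[1,n]`). -/
def domlt (n : ℕ) (μ η : ℕ → ℕ) : Prop :=
  (∃ i ∈ Finset.Icc 1 n, μ i ≠ η i) ∧
    ∀ p ∈ Finset.Icc 1 n, ∑ i ∈ Finset.Icc 1 p, μ i ≤ ∑ i ∈ Finset.Icc 1 p, η i

/-- `sortDesc n μ` is `μ⁺`, the decreasing rearrangement of `(μ_1,…,μ_n)` (1-based). -/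
def sortDesc (n : ℕ) (μ : ℕ → ℕ) : ℕ → ℕ := fun i =>
  ((((Finset.Icc 1 n).val.map μ).sort (· ≤ ·)).reverse).getD (i - 1) 0

/-- The partial order `≺` on compositions: `μ ≺ η` iff `μ⁺ < η⁺`, or `μ⁺ = η⁺` and `μ < η`. -/
def precOrd (n : ℕ) (μ η : ℕ → ℕ) : Prop :=
  domlt n (sortDesc n μ) (sortDesc n η) ∨
    ((∀ i ∈ Finset.Icc 1 n, sortDesc n μ i = sortDesc n η i) ∧ domlt n μ η)

/-- `P` is the nonsymmetric Macdonald polynomial `E_η(z; qp, tp)`: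
it is of the monic triangular form `z^η + Σ_{ν ≺ η} b_{ην} z^ν` and satisfies the
eigenvalue equations `Y_i P = η̄_i P` (stated at generic points). -/
def IsNSMac (qp tp : F) (n : ℕ) (η : ℕ → ℕ) (P : MvPolynomial ℕ F) : Prop :=
  P.coeff (truncFinsupp n η) = 1 ∧
  (∀ ν : ℕ →₀ ℕ, P.coeff ν ≠ 0 → ν = truncFinsupp n η ∨
    (IsComp n (fun j => ν j) ∧ wt n (fun j => ν j) = wt n η ∧ precOrd n (fun j => ν j) η)) ∧
  (∀ i ∈ Finset.Icc 1 n, ∀ z : ℕ → F, Generic qp n z →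
    YOp qp tp n i (fun w => MvPolynomial.eval w P) z = spec qp tp n η i * MvPolynomial.eval z P)

/-- `P` is the nonsymmetric interpolation Macdonald polynomial `E*_η(z;q,t)`:
a polynomial in `z_1,…,z_n` of total degree `≤ |η|`, with coefficient `1` on `z^η`,
vanishing at the spectral vectors `μ̄` of all compositions `μ ≠ η` with `|μ| ≤ |η|`. -/
def IsInterp (n : ℕ) (η : ℕ → ℕ) (P : MvPolynomial ℕ F) : Prop :=
  P.totalDegree ≤ wt n η ∧
  P.coeff (truncFinsupp n η) = 1 ∧
  (∀ ν : ℕ →₀ ℕ, P.coeff ν ≠ 0 → IsComp n (fun j => ν j)) ∧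
  ∀ μ : ℕ → ℕ, IsComp n μ → wt n μ ≤ wt n η → truncFinsupp n μ ≠ truncFinsupp n η →
    MvPolynomial.eval (spec q t n μ) P = 0

/-- The least element `t_1` of a finite set `I`. -/
def fmin (I : Finset ℕ) : ℕ := if h : I.Nonempty then I.min' h else 0

/-- The greatest element `t_s` of a finite set `I`. -/
def fmax (I : Finset ℕ) : ℕ := if h : I.Nonempty then I.max' h else 0

/-- The least element of `I` greater than `j`. -/
def succI (I : Finset ℕ) (j : ℕ) : ℕ := fmin (I.filter (fun k => j < k))

/-- The greatest element of `I` smaller than `j`. -/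
def predI (I : Finset ℕ) (j : ℕ) : ℕ := fmax (I.filter (fun k => k < j))

/-- `â(x,y) = (t-1)x/(x-y)`. -/
def ahat (tp x y : F) : F := (tp - 1) * x / (x - y)

/-- `b̂(x,y) = (x-ty)/(x-y)`. -/
def bhat (tp x y : F) : F := (x - tp * y) / (x - y)

/-- `A_I(z) = â(z_{t_s}/q, z_{t_1}) ∏_{u=1}^{s-1} â(z_{t_u}, z_{t_{u+1}})`. -/
def AI (qp tp : F) (I : Finset ℕ) (z : ℕ → F) : F :=
  ahat tp (z (fmax I) / qp) (z (fmin I)) *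
    (((I.sort (· ≤ ·)).zip (I.sort (· ≤ ·)).tail).map (fun p => ahat tp (z p.1) (z p.2))).prod

/-- `B_I(z)`. -/
def BI (qp tp : F) (n : ℕ) (I : Finset ℕ) (z : ℕ → F) : F :=
  (z (fmax I) - tp ^ (1 - (n:ℤ))) *
    (∏ j ∈ (Finset.Icc 1 n).filter (fun j => j < fmin I), bhat tp (z (fmax I) / qp) (z j)) *
    (∏ j ∈ (Finset.Icc 1 n).filter (fun j => j ∉ I ∧ fmin I < j), bhat tp (z (predI I j)) (z j))

/-- `χ_I^{(i)}(z)`. -/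
def chiI (qp tp : F) (I : Finset ℕ) (i : ℕ) (z : ℕ → F) : F :=
  if i = fmin I then (ahat tp (z (fmax I) / qp) (z i))⁻¹
  else (ahat tp (z (predI I i)) (z i))⁻¹

/-- `r_I^{(i)}(z) = χ_I^{(i)}(z) A_I(z) B_I(z)`. -/
def rI (qp tp : F) (n : ℕ) (I : Finset ℕ) (i : ℕ) (z : ℕ → F) : F :=
  chiI qp tp I i z * AI qp tp I z * BI qp tp n I z

/-- The point `Iz`. -/
def Ipt (qp : F) (I : Finset ℕ) (z : ℕ → F) : ℕ → F := fun j =>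
  if j = fmin I then z (fmax I) / qp
  else if j ∈ I then z (predI I j)
  else z j

/-- `B̃_I(z)`. -/
def BtildeI (qp tp : F) (n : ℕ) (I : Finset ℕ) (z : ℕ → F) : F :=
  (qp * z (fmin I) - tp ^ (1 - (n:ℤ))) *
    (∏ j ∈ (Finset.Icc 1 n).filter (fun j => j ∉ I ∧ j < fmax I), bhat tp (z (succI I j)) (z j)) *
    (∏ j ∈ (Finset.Icc 1 n).filter (fun j => fmax I < j), bhat tp (qp * z (fmin I)) (z j))

/-- `χ̃_I^{(i)}(z)`. -/
def chitildeI (qp tp : F) (I : Finset ℕ) (i : ℕ) (z : ℕ → F) : F :=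
  if i = fmax I then z i / ahat tp (z i) (qp * z (fmin I))
  else z i / ahat tp (z i) (z (succI I i))

/-- The composition `c_I(η)`. -/
def cIfun (I : Finset ℕ) (η : ℕ → ℕ) : ℕ → ℕ := fun j =>
  if j = fmax I then η (fmin I) + 1
  else if j ∈ I then η (succI I j)
  else η j

/-- `I` is maximal with respect to `η`. -/
def MaximalI (n : ℕ) (I : Finset ℕ) (η : ℕ → ℕ) : Prop :=
  (∀ j ∈ Finset.Icc 1 n, j ∉ I → j < fmax I → η j ≠ η (succI I j)) ∧
  (∀ j ∈ Finset.Icc 1 n, fmax I < j → η j ≠ η (fmin I) + 1)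

/-- `I` is comaximal with respect to `lam`. -/
def CoMaximalI (n : ℕ) (I : Finset ℕ) (lam : ℕ → ℕ) : Prop :=
  (∀ j ∈ Finset.Icc 1 n, j ∉ I → fmin I < j → lam j ≠ lam (predI I j)) ∧
  (∀ j ∈ Finset.Icc 1 n, j < fmin I → lam j ≠ lam (fmax I) - 1) ∧
  lam (fmax I) ≠ 0

/-- `J^I_η`: the collection of nonempty subsets of `{1,…,n}` maximal with respect to `η`. -/
def Jset (n : ℕ) (η : ℕ → ℕ) : Finset (Finset ℕ) :=
  (Finset.Icc 1 n).powerset.filter (fun I => I.Nonempty ∧ MaximalI n I η)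

/-- The arm length `a_η(i,j) = η_i - j`. -/
def armF (η : ℕ → ℕ) (i j : ℕ) : ℕ := η i - j

/-- The leg length `l_η(i,j)`. -/
def legF (n : ℕ) (η : ℕ → ℕ) (i j : ℕ) : ℕ :=
  ((Finset.Icc 1 n).filter fun k => i < k ∧ j ≤ η k ∧ η k ≤ η i).card +
  ((Finset.Icc 1 n).filter fun k => k < i ∧ j ≤ η k + 1 ∧ η k + 1 ≤ η i).card

/-- `d'_η(qp,tp) = ∏_{s ∈ diag(η)} (1 - qp^{a_η(s)+1} tp^{l_η(s)})`. -/
def dprime (qp tp : F) (n : ℕ) (η : ℕ → ℕ) : F :=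
  ∏ i ∈ Finset.Icc 1 n, ∏ j ∈ Finset.Icc 1 (η i),
    (1 - qp ^ (armF η i j + 1) * tp ^ (legF n η i j))

/-- `k_η = (∏_i η̄_i^{η_i}) d'_η(q⁻¹,t⁻¹)`. -/
def kconst (n : ℕ) (η : ℕ → ℕ) : F :=
  (∏ i ∈ Finset.Icc 1 n, spec q t n η i ^ (η i)) * dprime q⁻¹ t⁻¹ n η

/-- The Pieri coefficient `a_{η,c_I(η)}`. -/
def acoef (n : ℕ) (η : ℕ → ℕ) (I : Finset ℕ) : F :=
  -((q - 1) * dprime q⁻¹ t⁻¹ n η * AI q t I (spec q t n η) * BtildeI q t n I (spec q t n η)) /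
    (q ^ (η (fmin I) + 1) * (t - 1) * dprime q⁻¹ t⁻¹ n (cIfun I η))

/-- The tuples `(v_1,…,v_n)` of nonnegative integers with `v_1 + ⋯ + v_n = m`. -/
def compTuples (n m : ℕ) : Finset (Fin n → ℕ) :=
  (Fintype.piFinset fun _ => Finset.range (m + 1)).filter (fun v => ∑ i, v i = m)

/-- The (1-based) composition associated with a tuple `v : Fin n → ℕ`. -/
def ofFin (n : ℕ) (v : Fin n → ℕ) : ℕ → ℕ := fun j =>
  if h : 1 ≤ j ∧ j - 1 < n then v ⟨j - 1, h.2⟩ else 0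
/-!
The values of `c_I(η)` on `{1,…,n}` are those of `η` with one entry `a = η_{t_1}` raised
to `a + 1`. Since `∏ μ̄_i ^ μ_i = q ^ (∑ μ_i²) t ^ (-∑ μ_i l'_μ(i))`, it suffices to track two
sums under this change. The first grows by `2a + 1`. For the second, each pair `j < i`
contributes `min(μ_i, μ_j)` to `∑ μ_i l'_μ(i)`, so it only depends on the multiset of values,
and raising `a` to `a + 1` adds `#{j : η_j > a}`; by maximality no `j < t_1` has `η_j = a`,
so this count is `l'_η(t_1)`.
-/

open Finset

section Neighbours

variable {I : Finset ℕ}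

lemma fmin_mem (hne : I.Nonempty) : fmin I ∈ I := by
  rw [fmin, dif_pos hne]; exact I.min'_mem hne

lemma fmax_mem (hne : I.Nonempty) : fmax I ∈ I := by
  rw [fmax, dif_pos hne]; exact I.max'_mem hne

lemma fmin_le (hne : I.Nonempty) {j : ℕ} (hj : j ∈ I) : fmin I ≤ j := by
  rw [fmin, dif_pos hne]; exact I.min'_le j hj

lemma le_fmax (hne : I.Nonempty) {j : ℕ} (hj : j ∈ I) : j ≤ fmax I := by
  rw [fmax, dif_pos hne]; exact I.le_max' j hj

lemma succI_spec (hne : I.Nonempty) {j : ℕ} (hj : j ∈ I) (hjm : j ≠ fmax I) :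
    succI I j ∈ I ∧ j < succI I j ∧ ∀ k ∈ I, j < k → succI I j ≤ k := by
  have hne' : (I.filter (j < ·)).Nonempty :=
    ⟨fmax I, mem_filter.2 ⟨fmax_mem hne, (le_fmax hne hj).lt_of_ne hjm⟩⟩
  rw [succI, fmin, dif_pos hne']
  obtain ⟨hmem, hlt⟩ := mem_filter.1 (min'_mem _ hne')
  exact ⟨hmem, hlt, fun k hk hjk => min'_le _ k (mem_filter.2 ⟨hk, hjk⟩)⟩

lemma predI_spec (hne : I.Nonempty) {j : ℕ} (hj : j ∈ I) (hjm : j ≠ fmin I) :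
    predI I j ∈ I ∧ predI I j < j ∧ ∀ k ∈ I, k < j → k ≤ predI I j := by
  have hne' : (I.filter (· < j)).Nonempty :=
    ⟨fmin I, mem_filter.2 ⟨fmin_mem hne, (fmin_le hne hj).lt_of_ne' hjm⟩⟩
  rw [predI, fmax, dif_pos hne']
  obtain ⟨hmem, hlt⟩ := mem_filter.1 (max'_mem _ hne')
  exact ⟨hmem, hlt, fun k hk hkj => le_max' _ k (mem_filter.2 ⟨hk, hkj⟩)⟩

lemma predI_succI (hne : I.Nonempty) {j : ℕ} (hj : j ∈ I) (hjm : j ≠ fmax I) :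
    predI I (succI I j) = j := by
  obtain ⟨hs, hjs, hs_min⟩ := succI_spec hne hj hjm
  obtain ⟨hp, hps, hp_max⟩ := predI_spec hne hs ((fmin_le hne hj).trans_lt hjs).ne'
  exact le_antisymm (not_lt.1 fun h => (hs_min _ hp h).not_gt hps) (hp_max j hj hjs)

lemma succI_predI (hne : I.Nonempty) {j : ℕ} (hj : j ∈ I) (hjm : j ≠ fmin I) :
    succI I (predI I j) = j := by
  obtain ⟨hp, hpj, hp_max⟩ := predI_spec hne hj hjm
  obtain ⟨hs, hps, hs_min⟩ := succI_spec hne hp (hpj.trans_le (le_fmax hne hj)).ne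
  exact le_antisymm (hs_min j hj hpj) (not_lt.1 fun h => (hp_max _ hs h).not_gt hps)

lemma succI_of_lt_fmin (hne : I.Nonempty) {j : ℕ} (hj : j < fmin I) : succI I j = fmin I := by
  rw [succI, filter_true_of_mem fun k hk => hj.trans_le (fmin_le hne hk)]

end Neighbours

section ValuesOfCI

variable {M : Type*} [AddCommMonoid M] {I : Finset ℕ} (η : ℕ → ℕ) (f : ℕ → M)

lemma sum_erase_fmax_cIfun (hne : I.Nonempty) :
    ∑ j ∈ I.erase (fmax I), f (cIfun I η j) = ∑ j ∈ I.erase (fmin I), f (η j) := by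
  refine sum_nbij' (succI I) (predI I) ?_ ?_ ?_ ?_ ?_
  · intro j hj
    obtain ⟨hjm, hj⟩ := mem_erase.1 hj
    obtain ⟨hs, hjs, -⟩ := succI_spec hne hj hjm
    exact mem_erase.2 ⟨((fmin_le hne hj).trans_lt hjs).ne', hs⟩
  · intro j hj
    obtain ⟨hjm, hj⟩ := mem_erase.1 hj
    obtain ⟨hp, hpj, -⟩ := predI_spec hne hj hjm
    exact mem_erase.2 ⟨(hpj.trans_le (le_fmax hne hj)).ne, hp⟩
  · intro j hj
    obtain ⟨hjm, hj⟩ := mem_erase.1 hj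
    exact predI_succI hne hj hjm
  · intro j hj
    obtain ⟨hjm, hj⟩ := mem_erase.1 hj
    exact succI_predI hne hj hjm
  · intro j hj
    obtain ⟨hjm, hj⟩ := mem_erase.1 hj
    rw [cIfun, if_neg hjm, if_pos hj]

lemma sum_cIfun_add {s : Finset ℕ} (hI : I ⊆ s) (hne : I.Nonempty) :
    ∑ j ∈ s, f (cIfun I η j) + f (η (fmin I)) = ∑ j ∈ s, f (η j) + f (η (fmin I) + 1) := by
  have h_out : ∀ j ∈ s \ I, f (cIfun I η j) = f (η j) := by
    intro j hj
    obtain ⟨-, hjI⟩ := mem_sdiff.1 hj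
    rw [cIfun, if_neg (ne_of_mem_of_not_mem (fmax_mem hne) hjI).symm, if_neg hjI]
  have h_in :
      ∑ j ∈ I, f (cIfun I η j) = f (η (fmin I) + 1) + ∑ j ∈ I.erase (fmin I), f (η j) := by
    rw [← add_sum_erase I _ (fmax_mem hne), sum_erase_fmax_cIfun η f hne, cIfun, if_pos rfl]
  rw [← sum_sdiff hI, ← sum_sdiff hI, sum_congr rfl h_out, h_in,
    ← add_sum_erase I _ (fmin_mem hne)]
  abel

end ValuesOfCI

section PairwiseMin

variable {s : Finset ℕ} {μ ν : ℕ → ℕ}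

lemma sum_min_succ_eq_add_card (a : ℕ) :
    ∑ j ∈ s, min (μ j) (a + 1) = ∑ j ∈ s, min (μ j) a + #{j ∈ s | a < μ j} := by
  rw [card_filter, ← sum_add_distrib]
  exact sum_congr rfl fun j _ => by split_ifs <;> omega

/-- `hν` says that the values of `ν` on `s` are those of `μ` with one value `a` raised to
`a + 1`. -/
lemma sum_sum_min_of_raise {a : ℕ}
    (hν : ∀ f : ℕ → ℕ, ∑ i ∈ s, f (ν i) + f a = ∑ i ∈ s, f (μ i) + f (a + 1)) :
    ∑ i ∈ s, ∑ j ∈ s, min (ν i) (ν j) =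
      ∑ i ∈ s, ∑ j ∈ s, min (μ i) (μ j) + 2 * #{j ∈ s | a < μ j} + 1 := by
  have h_inner (x : ℕ) : ∑ j ∈ s, min x (ν j) + min x a = ∑ j ∈ s, min x (μ j) + min x (a + 1) :=
    hν (min x)
  have h_outer := hν fun x => ∑ j ∈ s, min x (ν j)
  have h_mixed : ∑ i ∈ s, ∑ j ∈ s, min (μ i) (ν j) + ∑ i ∈ s, min (μ i) a =
      ∑ i ∈ s, ∑ j ∈ s, min (μ i) (μ j) + ∑ i ∈ s, min (μ i) (a + 1) := by
    rw [← sum_add_distrib, ← sum_add_distrib]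
    exact sum_congr rfl fun i _ => h_inner (μ i)
  have h_at_a := h_inner a
  have h_at_succ := h_inner (a + 1)
  have h_flip (b : ℕ) : ∑ j ∈ s, min b (μ j) = ∑ j ∈ s, min (μ j) b :=
    sum_congr rfl fun _ _ => min_comm _ _
  have h_count := sum_min_succ_eq_add_card (s := s) (μ := μ) a
  rw [h_flip, min_self, min_eq_left (Nat.le_succ a)] at h_at_a
  rw [h_flip, min_self, min_eq_right (Nat.le_succ a)] at h_at_succ
  omega

lemma two_mul_sum_mul_lprime_add_sum (n : ℕ) (μ : ℕ → ℕ) :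
    2 * ∑ i ∈ Icc 1 n, μ i * lprime n μ i + ∑ i ∈ Icc 1 n, μ i =
      ∑ i ∈ Icc 1 n, ∑ j ∈ Icc 1 n, min (μ i) (μ j) := by
  set e : ℕ → ℕ → ℕ := fun i j =>
    (if j < i ∧ μ i ≤ μ j then μ i else 0) + (if i < j ∧ μ i < μ j then μ i else 0)
  have h_row (i : ℕ) : μ i * lprime n μ i = ∑ j ∈ Icc 1 n, e i j := by
    simp only [e, lprime, card_filter, Nat.mul_add, mul_sum, sum_add_distrib,
      mul_ite, mul_one, mul_zero]
  have h_diag : ∑ i ∈ Icc 1 n, μ i =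
      ∑ i ∈ Icc 1 n, ∑ j ∈ Icc 1 n, if i = j then μ i else 0 :=
    sum_congr rfl fun i hi => by rw [sum_ite_eq, if_pos hi]
  rw [sum_congr rfl fun i _ => h_row i, two_mul]
  nth_rewrite 2 [sum_comm]
  rw [h_diag, ← sum_add_distrib, ← sum_add_distrib]
  refine sum_congr rfl fun i _ => ?_
  rw [← sum_add_distrib, ← sum_add_distrib]
  refine sum_congr rfl fun j _ => ?_
  simp only [e]
  rcases Nat.lt_trichotomy i j with h | rfl | h <;> split_ifs <;> omega

end PairwiseMin

section Maximal

variable {n : ℕ} {η : ℕ → ℕ} {I : Finset ℕ}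

lemma card_lt_fmin_eq_lprime (hne : I.Nonempty) (hmax : MaximalI n I η) :
    #{j ∈ Icc 1 n | η (fmin I) < η j} = lprime n η (fmin I) := by
  have h_ne_before : ∀ j ∈ Icc 1 n, j < fmin I → η j ≠ η (fmin I) := by
    intro j hj hjt
    have hjI : j ∉ I := fun h => (fmin_le hne h).not_gt hjt
    simpa only [succI_of_lt_fmin hne hjt] using
      hmax.1 j hj hjI (hjt.trans_le (fmin_le hne (fmax_mem hne)))
  rw [lprime, ← card_union_of_disjoint, ← filter_or]
  · refine congrArg card (filter_congr fun j hj => ?_)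
    rcases Nat.lt_trichotomy j (fmin I) with h | rfl | h
    · have := h_ne_before j hj h
      omega
    · omega
    · omega
  · exact disjoint_filter.2 fun j _ h => by omega

lemma sum_mul_lprime_cIfun (hI : I ⊆ Icc 1 n) (hne : I.Nonempty) (hmax : MaximalI n I η) :
    ∑ i ∈ Icc 1 n, cIfun I η i * lprime n (cIfun I η) i =
      ∑ i ∈ Icc 1 n, η i * lprime n η i + lprime n η (fmin I) := by
  have h_min := sum_sum_min_of_raise fun f => sum_cIfun_add η f hI hne
  have h_sum := sum_cIfun_add η (fun x => x) hI hne
  have h_c := two_mul_sum_mul_lprime_add_sum n (cIfun I η)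
  have h_η := two_mul_sum_mul_lprime_add_sum n η
  have h_card := card_lt_fmin_eq_lprime hne hmax
  omega

end Maximal

lemma prod_spec_pow_eq (qp tp : F) (n : ℕ) (μ : ℕ → ℕ) :
    ∏ i ∈ Icc 1 n, spec qp tp n μ i ^ μ i =
      qp ^ (∑ i ∈ Icc 1 n, μ i * μ i) * tp⁻¹ ^ (∑ i ∈ Icc 1 n, μ i * lprime n μ i) := by
  rw [← prod_pow_eq_pow_sum, ← prod_pow_eq_pow_sum, ← prod_mul_distrib]
  refine prod_congr rfl fun i _ => ?_
  rw [spec, mul_pow, zpow_neg, zpow_natCast, ← inv_pow, ← pow_mul, ← pow_mul,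
    mul_comm (lprime n μ i)]

lemma q_ne_zero : q ≠ 0 :=
  (map_ne_zero_iff _ (IsFractionRing.injective (MvPolynomial (Fin 2) ℚ) F)).2
    (MvPolynomial.X_ne_zero 0)

lemma t_ne_zero : t ≠ 0 :=
  (map_ne_zero_iff _ (IsFractionRing.injective (MvPolynomial (Fin 2) ℚ) F)).2
    (MvPolynomial.X_ne_zero 1)

theorem kconst_ratio_general (n : ℕ)
    (η : ℕ → ℕ)
    (I : Finset ℕ) (hI : I ⊆ Finset.Icc 1 n) (hne : I.Nonempty)
    (hmax : MaximalI n I η) :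
    (∏ i ∈ Finset.Icc 1 n, spec q t n (cIfun I η) i ^ (cIfun I η i) =
      q ^ (2 * η (fmin I) + 1) * t ^ (-(lprime n η (fmin I) : ℤ)) *
        ∏ i ∈ Finset.Icc 1 n, spec q t n η i ^ (η i)) ∧
    (kconst n η / kconst n (cIfun I η) =
      dprime q⁻¹ t⁻¹ n η /
        (q ^ (2 * η (fmin I) + 1) * t ^ (-(lprime n η (fmin I) : ℤ)) *
          dprime q⁻¹ t⁻¹ n (cIfun I η))) := by
  have h_sq : ∑ i ∈ Icc 1 n, cIfun I η i * cIfun I η i =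
      ∑ i ∈ Icc 1 n, η i * η i + (2 * η (fmin I) + 1) := by
    have := sum_cIfun_add η (fun x => x * x) hI hne
    linarith
  have h_prod : ∏ i ∈ Icc 1 n, spec q t n (cIfun I η) i ^ (cIfun I η i) =
      q ^ (2 * η (fmin I) + 1) * t ^ (-(lprime n η (fmin I) : ℤ)) *
        ∏ i ∈ Icc 1 n, spec q t n η i ^ (η i) := by
    rw [prod_spec_pow_eq, prod_spec_pow_eq, h_sq, sum_mul_lprime_cIfun hI hne hmax,
      zpow_neg, zpow_natCast, ← inv_pow]
    ring
  have h_ne : ∏ i ∈ Icc 1 n, spec q t n η i ^ (η i) ≠ 0 :=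
    prod_ne_zero_iff.2 fun i _ =>
      pow_ne_zero _ (mul_ne_zero (pow_ne_zero _ q_ne_zero) (zpow_ne_zero _ t_ne_zero))
  refine ⟨h_prod, ?_⟩
  rw [kconst, kconst, h_prod, mul_comm (q ^ _ * _), mul_assoc, mul_div_mul_left _ _ h_ne]

/-- for `I` maximal with respect to `η` and `t_1 = min I`:
`∏_i (c_I(η)‾)_i^{(c_I(η))_i} = q^{2η_{t_1}+1} t^{-l'_η(t_1)} ∏_i η̄_i^{η_i}`;
equivalently `k_η/k_{c_I(η)} = d'_η(q⁻¹,t⁻¹)/(q^{2η_{t_1}+1} t^{-l'_η(t_1)} d'_{c_I(η)}(q⁻¹,t⁻¹))`. -/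
theorem kconst_ratio (n : ℕ) (hn : 2 ≤ n)
    (η : ℕ → ℕ) (hη : IsComp n η)
    (I : Finset ℕ) (hI : I ⊆ Finset.Icc 1 n) (hne : I.Nonempty)
    (hmax : MaximalI n I η) :
    (∏ i ∈ Finset.Icc 1 n, spec q t n (cIfun I η) i ^ (cIfun I η i) =
      q ^ (2 * η (fmin I) + 1) * t ^ (-(lprime n η (fmin I) : ℤ)) *
        ∏ i ∈ Finset.Icc 1 n, spec q t n η i ^ (η i)) ∧
    (kconst n η / kconst n (cIfun I η) =
      dprime q⁻¹ t⁻¹ n η /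
        (q ^ (2 * η (fmin I) + 1) * t ^ (-(lprime n η (fmin I) : ℤ)) *
          dprime q⁻¹ t⁻¹ n (cIfun I η))) :=
  kconst_ratio_general n η I hI hne hmax
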